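/- Let Γ = (G,I,O,λ) be a labelled open graph with λ taking values in {XY,YZ}, let S ⊆ V with λ(s)=XY for all s ∈ S, and let Γ' be the YZ-insertion of a fresh vertex z with neighbourhood S into Γ. Then Γ' has an extended causal flow if and only if there exists an extended causal flow (c,≺) for Γ such that for all v ∈ S and all w ∈ c⁻¹(S), neither v ≺ w nor v = w holds. -/

import Mathlib

open scoped Classical
noncomputable section

inductive MLabel : Type
  | X | Y | Z | XY | XZ | YZ
  deriving DecidableEq

/-- An extended causal flow on a labelled open graph `(G, I, O, lab)`:
`c` is the correction function (its values only matter on `Oᶜ`, and must avoid inputs),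
and `prec` is a strict partial order. -/
structure IsExtCausalFlow {V : Type*} (G : SimpleGraph V) (I O : Set V)
    (lab : V → MLabel) (c : V → V) (prec : V → V → Prop) : Prop where
  irrefl : ∀ u, ¬ prec u u
  trans : ∀ ⦃a b d⦄, prec a b → prec b d → prec a d
  corr_not_input : ∀ u, u ∉ O → c u ∉ I
  c1 : ∀ u, u ∉ O → prec u (c u) ∨ u = c u
  c2 : ∀ u, u ∉ O → lab u = MLabel.XY → G.Adj u (c u)
  c3 : ∀ u, u ∉ O → lab u = MLabel.YZ → c u = u
  c4 : ∀ u, u ∉ O → ∀ v, G.Adj (c u) v → u ≠ v → prec u v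

/-- The graph that results from inserting a fresh vertex (`none`) with
neighbourhood `S` into `G`. -/
def insertGraph {V : Type*} (G : SimpleGraph V) (S : Set V) : SimpleGraph (Option V) where
  Adj a b := match a, b with
    | some x, some y => G.Adj x y
    | some x, none => x ∈ S
    | none, some y => y ∈ S
    | none, none => False
  symm := by
    constructor
    rintro (_ | x) (_ | y) h
    · exact h
    · exact h
    · exact h
    · exact G.adj_symm h
  loopless := by
    constructor
    rintro (_ | x) h
    · exact h
    · exact G.irrefl h

/-- The measurement labelling after inserting a fresh vertex measured `ℓ`. -/
def insertLab {V : Type*} (lab : V → MLabel) (ℓ : MLabel) : Option V → MLabel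
  | none => ℓ
  | some v => lab v


/-- the YZ-insertion `Γ'` of a fresh vertex `z = none` with
neighbourhood `S` (all of whose elements are XY-measured) has an extended causal
flow if and only if there is an extended causal flow `(c, prec)` on `Γ` such that
no vertex of `S` equals or precedes any vertex of `c⁻¹(S)`. -/
theorem yz_insertion_causal_iff {V : Type*} (G : SimpleGraph V) (I O : Set V)
    (lab : V → MLabel)
    (hplanar : ∀ v, v ∉ O → lab v = MLabel.XY ∨ lab v = MLabel.YZ)
    (S : Set V) (hS : ∀ s ∈ S, lab s = MLabel.XY) :
    (∃ c' prec', IsExtCausalFlow (insertGraph G S) (some '' I) (some '' O)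
        (insertLab lab MLabel.YZ) c' prec') ↔
    (∃ c prec, IsExtCausalFlow G I O lab c prec ∧
      ∀ v ∈ S, ∀ w, w ∉ O → c w ∈ S → ¬(prec v w ∨ v = w)) := by
  constructor
  · rintro ⟨c', prec', F⟩
    have hzO : (none : Option V) ∉ some '' O := by simp
    have hznone : c' none = none := F.c3 none hzO rfl
    have hnoneS : ∀ s ∈ S, prec' none (some s) := by
      intro s hs
      refine F.c4 none hzO (some s) ?_ (by simp)
      rw [hznone]
      exact hs
    have hne : ∀ v, v ∉ O → ∃ x, c' (some v) = some x := by
      intro v hv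
      have hvO : (some v : Option V) ∉ some '' O := by simp [hv]
      cases hx : c' (some v) with
      | some x => exact ⟨x, rfl⟩
      | none =>
        exfalso
        rcases hplanar v hv with hxy | hyz
        · have hadj := F.c2 (some v) hvO hxy
          rw [hx] at hadj
          have hvS : v ∈ S := hadj
          have h1 : prec' (some v) none := by
            rcases F.c1 (some v) hvO with h | h
            · rw [hx] at h; exact h
            · rw [hx] at h; exact absurd h (by simp)
          exact F.irrefl (some v) (F.trans h1 (hnoneS v hvS))
        · have h := F.c3 (some v) hvO hyz
          rw [hx] at h
          exact absurd h (by simp)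
    set c : V → V := fun v => (c' (some v)).getD v with hcdef
    have hc : ∀ v, v ∉ O → c' (some v) = some (c v) := by
      intro v hv
      obtain ⟨x, hx⟩ := hne v hv
      simp [hcdef, hx]
    refine ⟨c, fun a b => prec' (some a) (some b), ⟨?_, ?_, ?_, ?_, ?_, ?_, ?_⟩, ?_⟩
    · exact fun u => F.irrefl (some u)
    · exact fun a b d h1 h2 => F.trans h1 h2
    · intro u hu
      have := F.corr_not_input (some u) (by simp [hu])
      rw [hc u hu] at this
      intro hI
      exact this ⟨_, hI, rfl⟩
    · intro u hu
      have := F.c1 (some u) (by simp [hu])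
      rw [hc u hu] at this
      rcases this with h | h
      · exact Or.inl h
      · exact Or.inr (Option.some.inj h)
    · intro u hu hxy
      have := F.c2 (some u) (by simp [hu]) hxy
      rw [hc u hu] at this
      exact this
    · intro u hu hyz
      have := F.c3 (some u) (by simp [hu]) hyz
      rw [hc u hu] at this
      exact Option.some.inj this
    · intro u hu v hadj huv
      refine F.c4 (some u) (by simp [hu]) (some v) ?_ (by simpa using huv)
      rw [hc u hu]
      exact hadj
    · intro v hv w hw hcwS
      have h1 : prec' (some w) none := by
        refine F.c4 (some w) (by simp [hw]) none ?_ (by simp)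
        rw [hc w hw]
        exact hcwS
      have h2 : prec' (some w) (some v) := F.trans h1 (hnoneS v hv)
      rintro (h | h)
      · exact F.irrefl (some v) (F.trans h h2)
      · subst h; exact F.irrefl (some v) h2
  · rintro ⟨c, prec, F, hcond⟩
    set P : V → Prop := fun a => ∃ a', (a = a' ∨ prec a a') ∧ a' ∉ O ∧ c a' ∈ S with hPdef
    set Q : V → Prop := fun b => ∃ s, s ∈ S ∧ (s = b ∨ prec s b) with hQdef
    have hcontra : ∀ a, P a → Q a → False := by
      rintro a ⟨a', hle, hO, hcS⟩ ⟨s, hsS, hsle⟩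
      have h : prec s a' ∨ s = a' := by
        rcases hsle with rfl | hsa
        · rcases hle with rfl | h
          · exact Or.inr rfl
          · exact Or.inl h
        · rcases hle with rfl | h
          · exact Or.inl hsa
          · exact Or.inl (F.trans hsa h)
      exact hcond s hsS a' hO hcS h
    have hlemP : ∀ a b, prec a b → P b → P a := by
      rintro a b hab ⟨a', hle, hO, hcS⟩
      refine ⟨a', Or.inr ?_, hO, hcS⟩
      rcases hle with rfl | h
      · exact hab
      · exact F.trans hab h
    have hlemQ : ∀ b d, Q b → prec b d → Q d := by
      rintro b d ⟨s, hsS, hle⟩ hbd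
      refine ⟨s, hsS, Or.inr ?_⟩
      rcases hle with rfl | h
      · exact hbd
      · exact F.trans h hbd
    refine ⟨Option.map c, fun x y =>
      match x, y with
      | some a, some b => prec a b ∨ (P a ∧ Q b)
      | some a, none => P a
      | none, some b => Q b
      | none, none => False, ⟨?_, ?_, ?_, ?_, ?_, ?_, ?_⟩⟩
    · rintro (_ | u)
      · exact id
      · rintro (h | ⟨hP, hQ⟩)
        · exact F.irrefl u h
        · exact hcontra u hP hQ
    · rintro (_ | a) (_ | b) (_ | d) h1 h2
      · exact h1
      · exact h1.elim
      · exact hcontra b h2 h1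
      · rcases h2 with h' | ⟨_, hQ'⟩
        · exact hlemQ b d h1 h'
        · exact hQ'
      · exact h2.elim
      · exact Or.inr ⟨h1, h2⟩
      · rcases h1 with h | ⟨hP, _⟩
        · exact hlemP a b h h2
        · exact hP
      · rcases h1 with h | ⟨hP, hQ⟩
        · rcases h2 with h' | ⟨hPb, hQ'⟩
          · exact Or.inl (F.trans h h')
          · exact Or.inr ⟨hlemP a b h hPb, hQ'⟩
        · rcases h2 with h' | ⟨_, hQ'⟩
          · exact Or.inr ⟨hP, hlemQ b d hQ h'⟩
          · exact Or.inr ⟨hP, hQ'⟩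
    · rintro (_ | u) hu
      · simp
      · have huO : u ∉ O := fun h => hu ⟨u, h, rfl⟩
        have := F.corr_not_input u huO
        simp only [Option.map_some]
        rintro ⟨x, hxI, hx⟩
        exact this (Option.some.inj hx ▸ hxI)
    · rintro (_ | u) hu
      · exact Or.inr rfl
      · have huO : u ∉ O := fun h => hu ⟨u, h, rfl⟩
        rcases F.c1 u huO with h | h
        · exact Or.inl (Or.inl h)
        · exact Or.inr (congrArg some h)
    · rintro (_ | u) hu hxy
      · exact absurd hxy (by simp [insertLab])
      · have huO : u ∉ O := fun h => hu ⟨u, h, rfl⟩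
        exact F.c2 u huO hxy
    · rintro (_ | u) hu hyz
      · rfl
      · have huO : u ∉ O := fun h => hu ⟨u, h, rfl⟩
        rcases hplanar u huO with h | h
        · exact absurd hyz (by simp [insertLab, h])
        · exact congrArg some (F.c3 u huO h)
    · rintro (_ | u) hu (_ | v) hadj huv
      · exact hadj.elim
      · exact ⟨v, hadj, Or.inl rfl⟩
      · have huO : u ∉ O := fun h => hu ⟨u, h, rfl⟩
        exact ⟨u, Or.inl rfl, huO, hadj⟩
      · have huO : u ∉ O := fun h => hu ⟨u, h, rfl⟩
        exact Or.inl (F.c4 u huO v hadj (fun h => huv (congrArg some h)))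
end
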